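/- The page-granularity Oreo mapping is injective into masked space: if each of p pages (each of size 2^12) in the valid region is relocated to a different subregion but the masked addresses of distinct pages occupy disjoint intervals [start + k·2^12, start + (k+1)·2^12) for k < p, then the combined virtual-to-physical mapping (composing per-page Mask2Valid inverses) is injective on the union of the relocated page intervals. -/

import Mathlib

def Virt2Mask (start len v : ℕ) : ℕ := ((v - start) % len) + start

/-! Each page lies inside a single period `[start + i * len, start + (i + 1) * len)`, where
`Virt2Mask` is the translation by `- i * len`, so it sends page `k` onto slot
`[start + k * s, start + (k + 1) * s)` of the masked region. The slot, hence the page and its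
offset `idx k * len`, is read back from the masked address, which gives a left inverse. -/

def mask2Virt (start len s : ℕ) (idx : ℕ → ℕ) (m : ℕ) : ℕ :=
  m + idx ((m - start) / s) * len

section
variable {start len : ℕ}

theorem virt2Mask_eq_sub_of_mem {i v : ℕ} (h₁ : start + i * len ≤ v)
    (h₂ : v < start + i * len + len) : Virt2Mask start len v = v - i * len := by
  have hsplit : v - start = (v - start - i * len) + i * len := by omega
  rw [Virt2Mask, hsplit, Nat.add_mul_mod_self_right, Nat.mod_eq_of_lt (by omega)]
  omega

theorem leftInvOn_mask2Virt_virt2Mask (s p : ℕ) (idx : ℕ → ℕ) (hp : p * s ≤ len) :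
    Set.LeftInvOn (mask2Virt start len s idx) (Virt2Mask start len)
      (⋃ k ∈ Set.Iio p,
        Set.Ico (start + idx k * len + k * s) (start + idx k * len + (k + 1) * s)) := by
  intro v hv
  simp only [Set.mem_iUnion, Set.mem_Ico, Set.mem_Iio, exists_prop] at hv
  obtain ⟨k, hk, hlo, hhi⟩ := hv
  have hslot : (k + 1) * s ≤ len := le_trans (Nat.mul_le_mul_right _ hk) hp
  have hmask : Virt2Mask start len v = v - idx k * len :=
    virt2Mask_eq_sub_of_mem (by omega) (by omega)
  have hpage : (v - idx k * len - start) / s = k :=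
    Nat.div_eq_of_lt_le (by omega) (by omega)
  rw [mask2Virt, hmask, hpage]
  omega

end

theorem page_granularity_injective_general (start len p : ℕ)
    (hp : p * 2 ^ 12 ≤ len)
    (idx : ℕ → ℕ) :
    Set.InjOn (Virt2Mask start len)
      (⋃ k ∈ Set.Iio p,
        Set.Ico (start + idx k * len + k * 2 ^ 12)
                (start + idx k * len + (k + 1) * 2 ^ 12)) :=
  (leftInvOn_mask2Virt_virt2Mask (2 ^ 12) p idx hp).injOn

/-- Page-granularity Oreo mapping is injective into masked space. -/
theorem page_granularity_injective (start len p : ℕ)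
    (hdvd : 2 ^ 12 ∣ len) (hp : p * 2 ^ 12 ≤ len)
    (idx : ℕ → ℕ) :
    Set.InjOn (Virt2Mask start len)
      (⋃ k ∈ Set.Iio p,
        Set.Ico (start + idx k * len + k * 2 ^ 12)
                (start + idx k * len + (k + 1) * 2 ^ 12)) :=
  page_granularity_injective_general start len p hp idx
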